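/- Let M be a finitely generated ℤ[t]-module of exponent 2ⁿ which has length one. Then the dual module M^∧ = Hom_{ℤ[t]}(M, ℚ[t]/ℤ[t]) has exponent 2ⁿ and has length one. -/

import Mathlib

noncomputable instance : Algebra (Polynomial ℤ) (Polynomial ℚ) :=
  (Polynomial.mapRingHom (Int.castRingHom ℚ)).toAlgebra

/-- The `ℤ[t]`-module `ℚ[t]/ℤ[t]`: the quotient of `ℚ[t]` by its `ℤ[t]`-submodule `ℤ[t]`. -/
noncomputable abbrev QtZt : Type :=
  Polynomial ℚ ⧸ LinearMap.range (Algebra.linearMap (Polynomial ℤ) (Polynomial ℚ))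

/-- An `R`-module `M` has *length one* if there is a short exact sequence
`0 → F₁ → F₀ → M → 0` with `F₀`, `F₁` finitely generated free `R`-modules. -/
def IsLengthOne (R M : Type*) [CommRing R] [AddCommGroup M] [Module R M] : Prop :=
  ∃ (k l : ℕ) (f : (Fin k → R) →ₗ[R] (Fin l → R)) (g : (Fin l → R) →ₗ[R] M),
    Function.Injective f ∧ Function.Surjective g ∧ LinearMap.range f = LinearMap.ker g

/-!
A presentation `0 → R^k --A--> R^l → M → 0` of a module killed by `2ⁿ` has `2ⁿ R^l ⊆ A R^k`, so
`A` acquires a right inverse over `ℚ[t]`, where `2` is a unit; together with injectivity over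
`ℤ[t]` this forces `k = l`, and `A` becomes invertible over `ℚ[t]`. By left exactness of `Hom`,
`Hom(M, ℚ[t]/ℤ[t])` is the module of maps `ψ : R^k → ℚ[t]/ℤ[t]` with `ψ ∘ A = 0`, and
`w ↦ (x ↦ [σx ⬝ (σw ᵥ* A⁻¹)])` identifies the cokernel of `y ↦ y ᵥ* A` on `ℤ[t]^k` with it
(this is the snake lemma for `A` acting on `0 → ℤ[t]^k → ℚ[t]^k → (ℚ[t]/ℤ[t])^k → 0`).
So `Aᵀ` presents the dual.
-/

open Matrix Polynomial

theorem LinearMap.exists_exact_surjective_of_range_eq {R W X Y Z : Type*} [CommRing R]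
    [AddCommGroup W] [AddCommGroup X] [AddCommGroup Y] [AddCommGroup Z]
    [Module R W] [Module R X] [Module R Y] [Module R Z]
    {u : W →ₗ[R] X} {φ : X →ₗ[R] Y} {i : Z →ₗ[R] Y} (hi : Function.Injective i)
    (hφ : Function.Exact u φ) (h : LinearMap.range φ = LinearMap.range i) :
    ∃ G : X →ₗ[R] Z, Function.Exact u G ∧ Function.Surjective G := by
  let G : X →ₗ[R] Z := (LinearEquiv.ofInjective i hi).symm.toLinearMap ∘ₗ
    φ.codRestrict (LinearMap.range i) fun x => h ▸ LinearMap.mem_range_self φ x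
  have hiG : i ∘ₗ G = φ := by
    ext x
    exact congrArg Subtype.val ((LinearEquiv.ofInjective i hi).apply_symm_apply _)
  refine ⟨G, (hi.comp_exact_iff_exact).mp (hiG ▸ hφ), fun z => ?_⟩
  obtain ⟨x, hx⟩ := (h ▸ LinearMap.mem_range_self i z : i z ∈ LinearMap.range φ)
  exact ⟨x, hi (by rw [← hx, ← hiG]; rfl)⟩

theorem RingHom.comp_vecMul {R S κ ι : Type*} [CommRing R] [CommRing S] [Fintype κ]
    (f : R →+* S) (A : Matrix κ ι R) (y : κ → R) : f ∘ (y ᵥ* A) = (f ∘ y) ᵥ* A.map f :=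
  funext (f.map_vecMul A y)

theorem Matrix.vecMul_inv_eq_iff {K ι : Type*} [CommRing K] [Fintype ι] [DecidableEq ι]
    {A : Matrix ι ι K} (hA : IsUnit A) {v w : ι → K} : v ᵥ* A⁻¹ = w ↔ v = w ᵥ* A := by
  have hdet := (isUnit_iff_isUnit_det A).mp hA
  constructor
  · rintro rfl
    rw [vecMul_vecMul, nonsing_inv_mul A hdet, vecMul_one]
  · rintro rfl
    rw [vecMul_vecMul, mul_nonsing_inv A hdet, vecMul_one]

theorem Matrix.height_le_width_of_mul_eq_one {K : Type*} [CommRing K] [StrongRankCondition K]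
    {k l : ℕ} {A : Matrix (Fin l) (Fin k) K} {B : Matrix (Fin k) (Fin l) K} (h : A * B = 1) :
    l ≤ k :=
  calc l = (1 : Matrix (Fin l) (Fin l) K).rank := by simp
    _ = (A * B).rank := by rw [h]
    _ ≤ A.rank := rank_mul_le_left A B
    _ ≤ k := rank_le_width A

theorem Matrix.exists_map_mul_eq_one_of_smul_mem_range {R S κ ι : Type*} [CommRing R]
    [CommRing S] [Fintype ι] [DecidableEq κ] (σ : R →+* S) (A : Matrix κ ι R) {r : R}
    (hr : IsUnit (σ r)) (h : ∀ v, r • v ∈ LinearMap.range A.mulVecLin) :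
    ∃ B : Matrix ι κ S, A.map σ * B = 1 := by
  choose y hy using fun j => h (Pi.single j 1)
  have hAy : A * (of y)ᵀ = r • 1 := by
    ext i j
    rw [smul_apply, one_eq_pi_single, Pi.single_comm, ← Pi.smul_apply, ← hy j]
    rfl
  obtain ⟨c, hc⟩ := hr.exists_left_inv
  refine ⟨c • (of y)ᵀ.map σ, ?_⟩
  rw [Matrix.mul_smul, ← Matrix.map_mul, hAy, Matrix.map_smul' _ _ _ (map_mul σ),
    Matrix.map_one _ σ.map_zero σ.map_one, smul_smul, hc, one_smul]

section QuotientPairing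

variable {R S : Type*} [CommRing R] [CommRing S] [Algebra R S] {ι : Type*} [Fintype ι]

local notation "Q" => S ⧸ LinearMap.range (Algebra.linearMap R S)
local notation "σ" => algebraMap R S

variable (R) in
noncomputable def quotPairing : (ι → S) →ₗ[R] (ι → R) →ₗ[R] Q :=
  (Fintype.bilinearCombination R R).compr₂ (LinearMap.range (Algebra.linearMap R S)).mkQ

theorem quotPairing_apply (u : ι → S) (x : ι → R) :
    quotPairing R u x =
      Submodule.Quotient.mk (p := LinearMap.range (Algebra.linearMap R S)) ((σ ∘ x) ⬝ᵥ u) := by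
  rw [quotPairing, LinearMap.compr₂_apply, Fintype.bilinearCombination_apply,
    Fintype.linearCombination_apply, Submodule.mkQ_apply]
  simp only [dotProduct, Algebra.smul_def, Function.comp_apply]

theorem quotPairing_comp_mulVecLin {κ : Type*} [Fintype κ] (A : Matrix κ ι R) (u : κ → S) :
    quotPairing R u ∘ₗ A.mulVecLin = quotPairing R (u ᵥ* A.map σ) := by
  refine LinearMap.ext fun x => ?_
  rw [LinearMap.comp_apply, quotPairing_apply, quotPairing_apply, mulVecLin_apply,
    show σ ∘ (A *ᵥ x) = A.map σ *ᵥ (σ ∘ x) from funext (RingHom.map_mulVec σ A x),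
    dotProduct_comm, dotProduct_mulVec, dotProduct_comm]

variable [DecidableEq ι]

theorem quotPairing_single (u : ι → S) (i : ι) (a : R) :
    quotPairing R u (Pi.single i a) = a • Submodule.Quotient.mk (u i) := by
  simp [quotPairing, Fintype.bilinearCombination]

theorem quotPairing_surjective :
    Function.Surjective (quotPairing R : (ι → S) → (ι → R) →ₗ[R] Q) := by
  intro ψ
  choose u hu using fun i => Submodule.Quotient.mk_surjective _ (ψ (Pi.single i 1))
  refine ⟨u, LinearMap.pi_ext fun i a => ?_⟩
  rw [quotPairing_single, hu, ← map_smul, ← Pi.single_smul, smul_eq_mul, mul_one]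

theorem quotPairing_eq_zero_iff (u : ι → S) :
    quotPairing R u = 0 ↔ ∃ w : ι → R, σ ∘ w = u := by
  refine ⟨fun h => ?_, ?_⟩
  · have hu i : u i ∈ Set.range σ := by
      simpa [quotPairing_single, Submodule.Quotient.mk_eq_zero] using
        LinearMap.congr_fun h (Pi.single i 1)
    choose w hw using hu
    exact ⟨w, funext hw⟩
  · rintro ⟨w, rfl⟩
    refine LinearMap.ext fun x => ?_
    rw [quotPairing_apply, LinearMap.zero_apply, Submodule.Quotient.mk_eq_zero,
      ← RingHom.map_dotProduct]
    exact LinearMap.mem_range_self _ _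

variable (S) in
noncomputable def quotPairingVecMulInv (A : Matrix ι ι R) : (ι → R) →ₗ[R] (ι → R) →ₗ[R] Q :=
  quotPairing R ∘ₗ (A.map σ)⁻¹.vecMulLinear.restrictScalars R ∘ₗ
    (Algebra.linearMap R S).compLeft ι

variable (S) in
theorem quotPairingVecMulInv_apply (A : Matrix ι ι R) (w : ι → R) :
    quotPairingVecMulInv S A w = quotPairing R ((σ ∘ w) ᵥ* (A.map σ)⁻¹) :=
  rfl

section IsUnitMap

variable {A : Matrix ι ι R} (hA : IsUnit (A.map (algebraMap R S)))
include hA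

theorem vecMul_injective_of_isUnit_map (hσ : Function.Injective σ) :
    Function.Injective A.vecMul := fun y y' h =>
  hσ.comp_left <| vecMul_injective_of_isUnit hA <| by
    simp only [← RingHom.comp_vecMul, h]

theorem exact_vecMulLinear_quotPairingVecMulInv (hσ : Function.Injective σ) :
    Function.Exact A.vecMulLinear (quotPairingVecMulInv S A) := by
  intro w
  rw [quotPairingVecMulInv_apply, quotPairing_eq_zero_iff]
  refine exists_congr fun y => ?_
  rw [eq_comm, vecMul_inv_eq_iff hA, ← RingHom.comp_vecMul, hσ.comp_left.eq_iff, eq_comm]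
  rfl

theorem ker_lcomp_mulVecLin_eq_range_quotPairingVecMulInv :
    LinearMap.ker (LinearMap.lcomp R Q A.mulVecLin) =
      LinearMap.range (quotPairingVecMulInv S A) := by
  ext ψ
  constructor
  · intro hψ
    obtain ⟨u, rfl⟩ := quotPairing_surjective ψ
    rw [LinearMap.mem_ker, LinearMap.lcomp_apply', quotPairing_comp_mulVecLin,
      quotPairing_eq_zero_iff] at hψ
    obtain ⟨w, hw⟩ := hψ
    exact ⟨w, by rw [quotPairingVecMulInv_apply, hw, (vecMul_inv_eq_iff hA).mpr rfl]⟩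
  · rintro ⟨w, rfl⟩
    rw [LinearMap.mem_ker, LinearMap.lcomp_apply', quotPairingVecMulInv_apply,
      quotPairing_comp_mulVecLin, quotPairing_eq_zero_iff]
    exact ⟨w, (vecMul_inv_eq_iff hA).mp rfl⟩

end IsUnitMap

theorem isLengthOne_linearMap_quotient_of_isUnit_map {M : Type*} [AddCommGroup M] [Module R M]
    (hσ : Function.Injective σ) {k : ℕ} {A : Matrix (Fin k) (Fin k) R}
    (hA : IsUnit (A.map σ)) {g : (Fin k → R) →ₗ[R] M}
    (hg : Function.Surjective g) (hAg : Function.Exact A.mulVecLin g) :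
    IsLengthOne R (M →ₗ[R] Q) := by
  have hdual := LinearMap.exact_lcomp_of_exact_of_surjective (N := Q) hAg hg
  obtain ⟨G, hG, hG_surj⟩ := LinearMap.exists_exact_surjective_of_range_eq
    (LinearMap.lcomp_injective_of_surjective g hg)
    (exact_vecMulLinear_quotPairingVecMulInv hA hσ)
    (by rw [← ker_lcomp_mulVecLin_eq_range_quotPairingVecMulInv hA, hdual.linearMap_ker_eq])
  exact ⟨k, k, A.vecMulLinear, G, vecMul_injective_of_isUnit_map hA hσ, hG_surj,
    hG.linearMap_ker_eq.symm⟩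

end QuotientPairing

theorem Polynomial.algebraMap_int_rat_injective : Function.Injective (algebraMap ℤ[X] ℚ[X]) :=
  Polynomial.map_injective (Int.castRingHom ℚ) Int.cast_injective

theorem Polynomial.isUnit_algebraMap_two_pow (n : ℕ) :
    IsUnit (algebraMap ℤ[X] ℚ[X] (2 ^ n)) := by
  have := ((isUnit_of_invertible (2 : ℚ)).map C).pow n
  rwa [map_ofNat, ← map_ofNat (algebraMap ℤ[X] ℚ[X]) 2, ← map_pow] at this

theorem dual_isLengthOne
    (M : Type) [AddCommGroup M] [Module (Polynomial ℤ) M]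
    (n : ℕ) (hexp : ∀ x : M, (2 : Polynomial ℤ) ^ n • x = 0)
    (hM : IsLengthOne (Polynomial ℤ) M) :
    (∀ φ : M →ₗ[Polynomial ℤ] QtZt, (2 : Polynomial ℤ) ^ n • φ = 0) ∧
      IsLengthOne (Polynomial ℤ) (M →ₗ[Polynomial ℤ] QtZt) := by
  refine ⟨fun φ => LinearMap.ext fun x => by
    rw [LinearMap.smul_apply, ← map_smul, hexp, map_zero, LinearMap.zero_apply], ?_⟩
  obtain ⟨k, l, f, g, hf, hg, hfg⟩ := hM
  obtain ⟨A, rfl⟩ : ∃ A : Matrix (Fin l) (Fin k) ℤ[X], A.mulVecLin = f :=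
    ⟨LinearMap.toMatrix' f, by rw [← Matrix.toLin'_apply', Matrix.toLin'_toMatrix']⟩
  have hAg : Function.Exact A.mulVecLin g := LinearMap.exact_iff.mpr hfg.symm
  obtain ⟨B, hB⟩ := A.exists_map_mul_eq_one_of_smul_mem_range _ (isUnit_algebraMap_two_pow n)
    fun v => (hAg _).mp (by rw [map_smul, hexp])
  obtain rfl : k = l := le_antisymm
    (by simpa using LinearMap.finrank_le_finrank_of_injective hf)
    (height_le_width_of_mul_eq_one hB)
  exact isLengthOne_linearMap_quotient_of_isUnit_map algebraMap_int_rat_injective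
    ((isUnit_iff_isUnit_det _).mpr (isUnit_det_of_right_inverse hB)) hg hAg
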